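/- Let K = 1 and assume a_{10} > 1, a_{11} > 1 and (a_{10} − a_{11})² − a_{1•} > 0. Then the LOOCV squared prediction error PE is uniquely minimized over [0, ∞) at λ* = a_{10} a_{11} / ( (a_{10} − a_{11})² − a_{1•} ): one has PE(λ*) < PE(λ) for every λ ≥ 0 with λ ≠ λ*. -/

import Mathlib

/-- Leave-one-out cross-validated squared prediction error for a saturated model with `K`
categories, counts `a0 k` (nonevents) and `a1 k` (events), and ridge penalty `l`. -/
noncomputable def loocvPE (K : ℕ) (a0 a1 : Fin K → ℕ) (l : ℝ) : ℝ :=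
  (1 / ∑ k : Fin K, ((a0 k : ℝ) + (a1 k : ℝ))) *
    ∑ k : Fin K,
      ((a0 k : ℝ) *
          (((a1 k : ℝ) + 2 * l) / ((a0 k : ℝ) + (a1 k : ℝ) - 1 + 4 * l)) ^ 2 +
       (a1 k : ℝ) *
          (1 - ((a1 k : ℝ) - 1 + 2 * l) / ((a0 k : ℝ) + (a1 k : ℝ) - 1 + 4 * l)) ^ 2)

/-!
With `s = A + B` and `D(λ) = s - 1 + 4λ`, the summed squared error of a single cell is
`N(λ) / D(λ)²` with `N(λ) = A (B + 2λ)² + B (A + 2λ)²`. Cross-multiplying, the difference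
`N(λ) D(λ*)² - N(λ*) D(λ)²` is a quadratic in `λ` that, because `λ*` solves
`((A - B)² - s) λ* = A B`, collapses to `4 (s + (s - 2)(A - B)²) (λ - λ*)²`. The constant is
positive as soon as `(A - B)² > s ≥ 0`, so `λ*` is the strict minimiser on `[0, ∞)`.
-/

namespace Loocv

variable {A B l m : ℝ}

noncomputable def cellError (A B l : ℝ) : ℝ :=
  A * ((B + 2 * l) / (A + B - 1 + 4 * l)) ^ 2 +
    B * (1 - (B - 1 + 2 * l) / (A + B - 1 + 4 * l)) ^ 2

theorem loocvPE_one (a0 a1 : ℕ) (l : ℝ) :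
    loocvPE 1 (fun _ => a0) (fun _ => a1) l = cellError a0 a1 l / (a0 + a1) := by
  simp only [loocvPE, cellError, Fin.sum_univ_one]
  ring

theorem cellError_eq_div (hD : A + B - 1 + 4 * l ≠ 0) :
    cellError A B l =
      (A * (B + 2 * l) ^ 2 + B * (A + 2 * l) ^ 2) / (A + B - 1 + 4 * l) ^ 2 := by
  have hcompl :
      1 - (B - 1 + 2 * l) / (A + B - 1 + 4 * l) = (A + 2 * l) / (A + B - 1 + 4 * l) := by
    rw [eq_div_iff hD, sub_mul, div_mul_cancel₀ _ hD]
    ring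
  rw [cellError, hcompl, div_pow, div_pow, ← mul_div_assoc, ← mul_div_assoc, ← add_div]

theorem cellError_sub_cellError (hDl : A + B - 1 + 4 * l ≠ 0) (hDm : A + B - 1 + 4 * m ≠ 0)
    (hm : ((A - B) ^ 2 - (A + B)) * m = A * B) :
    cellError A B l - cellError A B m =
      4 * ((A + B) + (A + B - 2) * (A - B) ^ 2) * (l - m) ^ 2 /
        ((A + B - 1 + 4 * l) ^ 2 * (A + B - 1 + 4 * m) ^ 2) := by
  rw [cellError_eq_div hDl, cellError_eq_div hDm, div_sub_div _ _ (pow_ne_zero 2 hDl)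
    (pow_ne_zero 2 hDm), div_eq_div_iff (by positivity) (by positivity)]
  linear_combination (8 * (l - m) * (A + B - 1 + 4 * l) * (A + B - 1 + 4 * l) ^ 2 *
    (A + B - 1 + 4 * m) ^ 2) * hm

section Positivity

variable (hA : 0 ≤ A) (hB : 0 ≤ B) (hQ : 0 < (A - B) ^ 2 - (A + B))
include hA hB hQ

theorem one_lt_add_of_lt_sq_sub : 1 < A + B := by
  nlinarith [mul_nonneg hA hB]

theorem curvature_pos : 0 < (A + B) + (A + B - 2) * (A - B) ^ 2 := by
  have hs := one_lt_add_of_lt_sq_sub hA hB hQ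
  rcases le_total 2 (A + B) with h2 | h2
  · nlinarith [sq_nonneg (A - B)]
  · -- `(A - B)² ≤ (A + B)²` reduces the claim to `0 < s (s - 1)²`.
    nlinarith [mul_nonneg hA hB, mul_pos (by linarith : (0 : ℝ) < A + B)
      (pow_pos (by linarith : (0 : ℝ) < A + B - 1) 2)]

theorem cellError_opt_lt (hl : 0 ≤ l) (hne : l ≠ A * B / ((A - B) ^ 2 - (A + B))) :
    cellError A B (A * B / ((A - B) ^ 2 - (A + B))) < cellError A B l := by
  set m := A * B / ((A - B) ^ 2 - (A + B))
  have hs := one_lt_add_of_lt_sq_sub hA hB hQ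
  have hm0 : 0 ≤ m := by positivity
  have hDl : 0 < A + B - 1 + 4 * l := by linarith
  have hDm : 0 < A + B - 1 + 4 * m := by linarith
  have hm : ((A - B) ^ 2 - (A + B)) * m = A * B := mul_div_cancel₀ _ hQ.ne'
  have hlm : 0 < (l - m) ^ 2 := sq_pos_of_ne_zero (sub_ne_zero.mpr hne)
  have hdiff := cellError_sub_cellError hDl.ne' hDm.ne' hm
  have := curvature_pos hA hB hQ
  have : 0 < cellError A B l - cellError A B m := by rw [hdiff]; positivity
  linarith

end Positivity

end Loocv

open Loocv in
theorem stmt15_general (a10 a11 : ℕ)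
    (hgt : 0 < ((a10 : ℝ) - (a11 : ℝ)) ^ 2 - ((a10 : ℝ) + (a11 : ℝ))) :
    ∀ l : ℝ, 0 ≤ l →
      l ≠ (a10 : ℝ) * (a11 : ℝ) /
          (((a10 : ℝ) - (a11 : ℝ)) ^ 2 - ((a10 : ℝ) + (a11 : ℝ))) →
      loocvPE 1 (fun _ => a10) (fun _ => a11)
        ((a10 : ℝ) * (a11 : ℝ) /
          (((a10 : ℝ) - (a11 : ℝ)) ^ 2 - ((a10 : ℝ) + (a11 : ℝ)))) <
      loocvPE 1 (fun _ => a10) (fun _ => a11) l := by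
  intro l hl hne
  have hA : (0 : ℝ) ≤ a10 := Nat.cast_nonneg _
  have hB : (0 : ℝ) ≤ a11 := Nat.cast_nonneg _
  rw [loocvPE_one, loocvPE_one]
  exact div_lt_div_of_pos_right (cellError_opt_lt hA hB hgt hl hne)
    (by linarith [one_lt_add_of_lt_sq_sub hA hB hgt])

/-- For `K = 1` with `a_{10}, a_{11} > 1` and `(a_{10} − a_{11})² − a_{1•} > 0`, the LOOCV
squared prediction error is uniquely minimized over `[0, ∞)` at
`λ* = a_{10} a_{11} / ((a_{10} − a_{11})² − a_{1•})`. -/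
theorem stmt15 (a10 a11 : ℕ) (h0 : 1 < a10) (h1 : 1 < a11)
    (hgt : 0 < ((a10 : ℝ) - (a11 : ℝ)) ^ 2 - ((a10 : ℝ) + (a11 : ℝ))) :
    ∀ l : ℝ, 0 ≤ l →
      l ≠ (a10 : ℝ) * (a11 : ℝ) /
          (((a10 : ℝ) - (a11 : ℝ)) ^ 2 - ((a10 : ℝ) + (a11 : ℝ))) →
      loocvPE 1 (fun _ => a10) (fun _ => a11)
        ((a10 : ℝ) * (a11 : ℝ) /
          (((a10 : ℝ) - (a11 : ℝ)) ^ 2 - ((a10 : ℝ) + (a11 : ℝ)))) <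
      loocvPE 1 (fun _ => a10) (fun _ => a11) l :=
  stmt15_general a10 a11 hgt
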